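/- arXiv:2210.05807 — 3 statements merged into one kernel-verified Lean document; each statement's English description precedes it below -/
import Mathlib

section
/- Let κ ≥ 1/2 and define τ_t = min{(t−1)/2, √(2κ)} for t ≥ 1, θ_t = τ_t/(τ_{t−1} + 1) for t ≥ 2, w_1 = 1 and w_t = w_{t−1}/θ_t for t ≥ 2. Then the partial sums W_N = Σ_{t=1}^N w_t satisfy W_N ≥ √(2κ)[(1 + 1/√(2κ))^{N−4} − 1] for all N ≥ 5. -/
open Real Finset

set_option maxHeartbeats 1600000

/-- Geometric lower bound on the accumulated weights in the strongly convex
ACGD-S method: with τ_t = min{(t−1)/2, √(2κ)}, θ_t = τ_t/(τ_{t−1}+1),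
w_1 = 1, w_t = w_{t−1}/θ_t, one has
Σ_{t=1}^N w_t ≥ √(2κ)[(1 + 1/√(2κ))^{N−4} − 1] for all N ≥ 5. -/
theorem acgds_weight_lower_bound
    (κ : ℝ) (hκ : 1 / 2 ≤ κ)
    (τ θ w : ℕ → ℝ)
    (hτ : ∀ t : ℕ, 1 ≤ t → τ t = min (((t : ℝ) - 1) / 2) (Real.sqrt (2 * κ)))
    (hθ : ∀ t : ℕ, 2 ≤ t → θ t = τ t / (τ (t - 1) + 1))
    (hw1 : w 1 = 1)
    (hw : ∀ t : ℕ, 2 ≤ t → w t = w (t - 1) / θ t) :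
    ∀ N : ℕ, 5 ≤ N →
      ∑ t ∈ Finset.Icc 1 N, w t ≥
        Real.sqrt (2 * κ) * ((1 + 1 / Real.sqrt (2 * κ)) ^ (N - 4) - 1) := by
  set s := Real.sqrt (2 * κ) with hsdef
  have h2κ : (1:ℝ) ≤ 2 * κ := by linarith
  have hs1 : 1 ≤ s := by
    rw [hsdef, show (1:ℝ) = Real.sqrt 1 by simp]
    exact Real.sqrt_le_sqrt h2κ
  have hspos : 0 < s := by linarith
  clear_value s
  -- basic facts about τ
  have hτ1 : τ 1 = 0 := by
    rw [hτ 1 le_rfl, show (((1:ℕ):ℝ) - 1) / 2 = 0 by norm_num, min_eq_left hspos.le]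
  have hτpos : ∀ t : ℕ, 2 ≤ t → 0 < τ t := by
    intro t ht
    have h2 : (2:ℝ) ≤ (t:ℝ) := by exact_mod_cast ht
    rw [hτ t (by omega)]
    exact lt_min (by linarith) hspos
  have hτnonneg : ∀ t : ℕ, 1 ≤ t → 0 ≤ τ t := by
    intro t ht
    have h1 : (1:ℝ) ≤ (t:ℝ) := by exact_mod_cast ht
    rw [hτ t ht]
    exact le_min (by linarith) hspos.le
  have hτs : ∀ t : ℕ, 1 ≤ t → τ t ≤ s := by
    intro t ht; rw [hτ t ht]; exact min_le_right _ _
  have hτhalf : ∀ t : ℕ, 1 ≤ t → τ t ≤ ((t:ℝ) - 1) / 2 := by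
    intro t ht; rw [hτ t ht]; exact min_le_left _ _
  -- the recursion in product form
  have hrec : ∀ t : ℕ, 1 ≤ t → w (t + 1) * τ (t + 1) = w t * (τ t + 1) := by
    intro t ht
    have h2 : 2 ≤ t + 1 := by omega
    have hθe := hθ (t + 1) h2
    have hwe := hw (t + 1) h2
    simp only [Nat.add_sub_cancel] at hθe hwe
    have hτp : 0 < τ (t + 1) := hτpos (t + 1) h2
    have hτd : 0 < τ t + 1 := by have := hτnonneg t ht; linarith
    rw [hwe, hθe]
    field_simp
  have hwpos : ∀ t : ℕ, 1 ≤ t → 0 < w t := by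
    intro t ht
    induction t, ht using Nat.le_induction with
    | base => rw [hw1]; norm_num
    | succ t ht ih =>
      have h := hrec t ht
      have hτp : 0 < τ (t + 1) := hτpos (t + 1) (by omega)
      have hτd : 0 < τ t + 1 := by have := hτnonneg t ht; linarith
      have hwt := ih
      have : w (t + 1) = w t * (τ t + 1) / τ (t + 1) := by
        field_simp at h ⊢; linarith [h]
      rw [this]; positivity
  -- key telescoping identity : w_{t+1} τ_{t+1} = W_t
  have key : ∀ t : ℕ, 1 ≤ t → w (t + 1) * τ (t + 1) = ∑ j ∈ Finset.Icc 1 t, w j := by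
    intro t ht
    induction t, ht using Nat.le_induction with
    | base =>
      rw [hrec 1 le_rfl, hτ1]
      simp [hw1]
    | succ t ht ih =>
      rw [Finset.sum_Icc_succ_top (by omega : 1 ≤ t + 1), ← ih, hrec (t + 1) (by omega)]
      ring
  have Wpos : ∀ t : ℕ, 1 ≤ t → 0 < ∑ j ∈ Finset.Icc 1 t, w j := by
    intro t ht
    apply Finset.sum_pos
    · intro i hi
      simp only [Finset.mem_Icc] at hi
      exact hwpos i hi.1
    · exact ⟨1, by simp; omega⟩
  -- geometric growth step
  have hgeo : ∀ t : ℕ, 1 ≤ t →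
      (∑ j ∈ Finset.Icc 1 t, w j) * (1 + 1 / s) ≤ ∑ j ∈ Finset.Icc 1 (t + 1), w j := by
    intro t ht
    rw [Finset.sum_Icc_succ_top (by omega : 1 ≤ t + 1)]
    have hk := key t ht
    have hτp : 0 < τ (t + 1) := hτpos (t + 1) (by omega)
    have hW := Wpos t ht
    have hwt1 : w (t + 1) = (∑ j ∈ Finset.Icc 1 t, w j) / τ (t + 1) := by
      field_simp at hk ⊢; linarith [hk]
    have hle : (∑ j ∈ Finset.Icc 1 t, w j) / s ≤ (∑ j ∈ Finset.Icc 1 t, w j) / τ (t + 1) := by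
      apply div_le_div_of_nonneg_left hW.le hτp (hτs (t + 1) (by omega))
    rw [hwt1]
    have : (∑ j ∈ Finset.Icc 1 t, w j) * (1 + 1 / s)
        = (∑ j ∈ Finset.Icc 1 t, w j) + (∑ j ∈ Finset.Icc 1 t, w j) / s := by
      field_simp
    rw [this]
    linarith
  -- quadratic lower bound
  have hpoly : ∀ t : ℕ, 1 ≤ t → (t:ℝ) * ((t:ℝ) + 1) / 2 ≤ ∑ j ∈ Finset.Icc 1 t, w j := by
    intro t ht
    induction t, ht using Nat.le_induction with
    | base => simp [hw1]
    | succ t ht ih =>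
      rw [Finset.sum_Icc_succ_top (by omega : 1 ≤ t + 1)]
      have hk := key t ht
      have hτp : 0 < τ (t + 1) := hτpos (t + 1) (by omega)
      have hW := Wpos t ht
      have ht1 : (1:ℝ) ≤ (t:ℝ) := by exact_mod_cast ht
      have hwt1 : w (t + 1) = (∑ j ∈ Finset.Icc 1 t, w j) / τ (t + 1) := by
        field_simp at hk ⊢; linarith [hk]
      have hτb : τ (t + 1) ≤ (t:ℝ) / 2 := by
        have := hτhalf (t + 1) (by omega)
        push_cast at this
        linarith
      have hth : (0:ℝ) < (t:ℝ) / 2 := by linarith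
      have hle : (∑ j ∈ Finset.Icc 1 t, w j) / ((t:ℝ) / 2)
          ≤ (∑ j ∈ Finset.Icc 1 t, w j) / τ (t + 1) :=
        div_le_div_of_nonneg_left hW.le hτp hτb
      have hle2 : ((t:ℝ) + 1) ≤ (∑ j ∈ Finset.Icc 1 t, w j) / ((t:ℝ) / 2) := by
        rw [le_div_iff₀ hth]
        nlinarith [ih]
      push_cast
      rw [hwt1]
      nlinarith [ih, hle, hle2]
  -- exp facts
  have hE : Real.exp 2 < 7.39 := by
    have h1 := Real.exp_one_lt_d9
    have h2 : Real.exp 2 = Real.exp 1 * Real.exp 1 := by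
      rw [← Real.exp_add]; norm_num
    nlinarith [Real.exp_pos 1]
  have hqexp : ∀ k : ℕ, (1 + 1 / s) ^ k ≤ Real.exp ((k:ℝ) / s) := by
    intro k
    have h1 : 1 + 1 / s ≤ Real.exp (1 / s) := by
      have := Real.add_one_le_exp (1 / s); linarith
    have h2 : (1 + 1 / s) ^ k ≤ Real.exp (1 / s) ^ k := by
      apply pow_le_pow_left₀ (by positivity) h1
    have h3 : Real.exp (1 / s) ^ k = Real.exp ((k:ℝ) / s) := by
      rw [← Real.exp_nat_mul]; ring_nf
    linarith [h2, h3.le, h3.ge]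
  have hq1 : (1:ℝ) ≤ 1 + 1 / s := by
    have : 0 < 1 / s := by positivity
    linarith
  -- main induction
  have main : ∀ k : ℕ,
      s * ((1 + 1 / s) ^ k - 1) ≤ ∑ j ∈ Finset.Icc 1 (k + 4), w j ∧
      (2 * s ≤ (k:ℝ) + 4 → s * (1 + 1 / s) ^ k ≤ ∑ j ∈ Finset.Icc 1 (k + 4), w j) := by
    intro k
    induction k with
    | zero =>
      constructor
      · simp only [pow_zero]
        have := Wpos 4 (by omega)
        norm_num
        linarith
      · intro h
        simp only [Nat.cast_zero, zero_add] at h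
        have hp := hpoly 4 (by omega)
        norm_num at hp ⊢
        linarith
    | succ k ih =>
      obtain ⟨ih1, ih2⟩ := ih
      have c0 : (0:ℝ) ≤ (k:ℝ) := Nat.cast_nonneg k
      have part2 : 2 * s ≤ ((k:ℝ) + 1) + 4 →
          s * (1 + 1 / s) ^ (k + 1) ≤ ∑ j ∈ Finset.Icc 1 (k + 1 + 4), w j := by
        intro h
        rw [show k + 1 + 4 = (k + 4) + 1 from by omega]
        by_cases hc : 2 * s ≤ (k:ℝ) + 4
        · have h2 := ih2 hc
          have hg := hgeo (k + 4) (by omega)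
          calc s * (1 + 1 / s) ^ (k + 1)
              = (s * (1 + 1 / s) ^ k) * (1 + 1 / s) := by ring
            _ ≤ (∑ j ∈ Finset.Icc 1 (k + 4), w j) * (1 + 1 / s) := by
                apply mul_le_mul_of_nonneg_right h2 (by linarith)
            _ ≤ ∑ j ∈ Finset.Icc 1 ((k + 4) + 1), w j := hg
        · push_neg at hc
          have hp := hpoly (k + 5) (by omega)
          push_cast at hp
          rw [show (k + 4) + 1 = k + 5 from by omega]
          -- show s * q^{k+1} ≤ (k+5)(k+6)/2
          set a := Real.exp (2 - 6 / ((k:ℝ) + 4)) with hadef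
      -- q^{k+1} ≤ a
          have hx1 : ((k:ℝ) + 1) / s ≤ 2 - 6 / ((k:ℝ) + 4) := by
            have hs2 : ((k:ℝ) + 4) / 2 < s := by linarith
            have h1 : ((k:ℝ) + 1) / s ≤ ((k:ℝ) + 1) / (((k:ℝ) + 4) / 2) :=
              div_le_div_of_nonneg_left (by linarith) (by linarith) hs2.le
            have h2 : ((k:ℝ) + 1) / (((k:ℝ) + 4) / 2) = 2 - 6 / ((k:ℝ) + 4) := by
              field_simp
              ring
            linarith
          have hqa : (1 + 1 / s) ^ (k + 1) ≤ a := by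
            have := hqexp (k + 1)
            push_cast at this
            calc (1 + 1 / s) ^ (k + 1) ≤ Real.exp (((k:ℝ) + 1) / s) := this
              _ ≤ a := Real.exp_le_exp.mpr hx1
          have hapos : 0 < a := Real.exp_pos _
          -- a * (k+10) ≤ 7.39 * (k+4)
          have haux : a * (1 + 6 / ((k:ℝ) + 4)) ≤ Real.exp 2 := by
            have h6 : (0:ℝ) ≤ 6 / ((k:ℝ) + 4) := by positivity
            have h1 : 1 + 6 / ((k:ℝ) + 4) ≤ Real.exp (6 / ((k:ℝ) + 4)) := by
              have := Real.add_one_le_exp (6 / ((k:ℝ) + 4)); linarith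
            calc a * (1 + 6 / ((k:ℝ) + 4))
                ≤ a * Real.exp (6 / ((k:ℝ) + 4)) := by
                  apply mul_le_mul_of_nonneg_left h1 hapos.le
              _ = Real.exp 2 := by
                  rw [hadef, ← Real.exp_add]; ring_nf
          have hk4 : (0:ℝ) < (k:ℝ) + 4 := by linarith
          clear_value a
          have haux2 : a * ((k:ℝ) + 10) ≤ 7.39 * ((k:ℝ) + 4) := by
            have h1 : a * (1 + 6 / ((k:ℝ) + 4)) * ((k:ℝ) + 4) ≤ 7.39 * ((k:ℝ) + 4) := by
              apply mul_le_mul_of_nonneg_right _ hk4.le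
              linarith
            have h2 : a * (1 + 6 / ((k:ℝ) + 4)) * ((k:ℝ) + 4) = a * ((k:ℝ) + 10) := by
              have h3 : (1 + 6 / ((k:ℝ) + 4)) * ((k:ℝ) + 4) = (k:ℝ) + 10 := by
                field_simp
                ring
              rw [mul_assoc, h3]
            linarith
          have ha6 : a ≤ (k:ℝ) + 6 := by nlinarith
          have hsle : s ≤ ((k:ℝ) + 5) / 2 := by linarith
          have hqnn : (0:ℝ) ≤ (1 + 1 / s) ^ (k + 1) := by positivity
          calc s * (1 + 1 / s) ^ (k + 1)
              ≤ (((k:ℝ) + 5) / 2) * a := by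
                apply mul_le_mul hsle hqa hqnn (by linarith)
            _ ≤ (((k:ℝ) + 5) / 2) * ((k:ℝ) + 6) := by
                apply mul_le_mul_of_nonneg_left ha6 (by linarith)
            _ = ((k:ℝ) + 5) * (((k:ℝ) + 5) + 1) / 2 := by ring
            _ ≤ ∑ j ∈ Finset.Icc 1 (k + 5), w j := hp
      constructor
      · by_cases h : 2 * s ≤ ((k:ℝ) + 1) + 4
        · have hpp := part2 h
          push_cast
          have h2 : s * ((1 + 1 / s) ^ (k + 1) - 1) = s * (1 + 1 / s) ^ (k + 1) - s := by ring
          push_cast at hpp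
          linarith
        · push_neg at h
          have hp := hpoly (k + 5) (by omega)
          push_cast at hp
          rw [show k + 1 + 4 = k + 5 from by omega]
          -- s (q^{k+1} - 1) ≤ (k+1) e^2 ≤ (k+5)(k+6)/2
          have hx0 : 0 ≤ ((k:ℝ) + 1) / s := by positivity
          have hx2 : ((k:ℝ) + 1) / s ≤ 2 := by
            rw [div_le_iff₀ hspos]
            linarith
          set E := Real.exp (((k:ℝ) + 1) / s) with hEdef
          have hqa : (1 + 1 / s) ^ (k + 1) ≤ E := by
            have := hqexp (k + 1)
            push_cast at this
            exact this
          have hexp2 : E ≤ Real.exp 2 := Real.exp_le_exp.mpr hx2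
          have hsub1 : E - 1 ≤ (((k:ℝ) + 1) / s) * E := by
            have h1 : Real.exp (-(((k:ℝ) + 1) / s)) * E = 1 := by
              rw [hEdef, ← Real.exp_add]; simp
            nlinarith [Real.add_one_le_exp (-(((k:ℝ) + 1) / s)), Real.exp_pos (((k:ℝ) + 1) / s)]
          have hexpos : 0 < E := Real.exp_pos _
          clear_value E
          have hsub2 : s * (E - 1) ≤ ((k:ℝ) + 1) * E := by
            have := mul_le_mul_of_nonneg_left hsub1 hspos.le
            have hsx : s * ((((k:ℝ) + 1) / s) * E) = ((k:ℝ) + 1) * E := by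
              field_simp
            linarith
          calc s * ((1 + 1 / s) ^ (k + 1) - 1)
              ≤ s * (E - 1) :=
                mul_le_mul_of_nonneg_left (by linarith) hspos.le
            _ ≤ ((k:ℝ) + 1) * E := hsub2
            _ ≤ ((k:ℝ) + 1) * 7.39 :=
                mul_le_mul_of_nonneg_left (by linarith) (by linarith)
            _ ≤ ((k:ℝ) + 5) * (((k:ℝ) + 5) + 1) / 2 := by nlinarith [sq_nonneg ((k:ℝ) - 2)]
            _ ≤ ∑ j ∈ Finset.Icc 1 (k + 5), w j := hp
      · intro h
        push_cast at h
        exact part2 h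
  -- conclude
  intro N hN
  obtain ⟨k, rfl⟩ : ∃ k, N = k + 4 := ⟨N - 4, by omega⟩
  rw [ge_iff_le, Nat.add_sub_cancel]
  exact (main k).1
end

section
/- Let W > 0, M > 0, Δ > 0 with W·M ≥ 1 (W M being the first summand). Let S = min{n ∈ ℕ₊ : Σ_{s=1}^n (W M + (s−1)) ≥ W M² Δ·w} for some w > 0 with the minimum attained, and let Γ ≥ 0 satisfy Σ_{s=1}^S (Γ W M + (s−1)) = Γ² w M² Δ. Then S/Γ ≥ S − 2. -/
open Finset

lemma sum_Icc_add_sub_one (c : ℝ) (n : ℕ) :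
    ∑ s ∈ Icc 1 n, (c + ((s : ℝ) - 1)) = n * c + n * (n - 1) / 2 := by
  induction n with
  | zero => simp
  | succ n ih =>
    rw [sum_Icc_succ_top (by omega), ih]
    push_cast
    ring

/-- If `(S - 2) Γ > S`, then each summand of `Γ² ((S - 1) A + (S - 1) (S - 2) / 2)` dominates the
corresponding summand of `S Γ A + S (S - 1) / 2`, contradicting `hmin` multiplied by `Γ²`. -/
lemma sub_two_mul_le_of_sq_mul_eq {A B Γ S : ℝ} (hA : 0 ≤ A) (hS : 2 < S) (hΓ : 0 < Γ)
    (hmin : (S - 1) * A + (S - 1) * (S - 2) / 2 < B)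
    (heq : S * (Γ * A) + S * (S - 1) / 2 = Γ ^ 2 * B) :
    (S - 2) * Γ ≤ S := by
  by_contra! hlarge
  have hΓ1 : 1 < Γ := by nlinarith
  have hlin : S * (Γ * A) ≤ Γ ^ 2 * ((S - 1) * A) := by nlinarith [mul_nonneg hΓ.le hA]
  have hquad : S * (S - 1) / 2 < Γ ^ 2 * ((S - 1) * (S - 2) / 2) := by nlinarith
  nlinarith [mul_lt_mul_of_pos_left hmin (pow_pos hΓ 2)]

theorem S_div_Gamma_ge_general
    (W M Δ w : ℝ)
    (hWM : 1 ≤ W * M)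
    (S : ℕ)
    (hSmin : ∀ n : ℕ, 1 ≤ n →
      (∑ s ∈ Finset.Icc 1 n, (W * M + ((s : ℝ) - 1))) ≥ w * M ^ 2 * Δ → S ≤ n)
    (Γ : ℝ) (hΓ : 0 ≤ Γ)
    (hΓeq : (∑ s ∈ Finset.Icc 1 S, (Γ * (W * M) + ((s : ℝ) - 1))) = Γ ^ 2 * (w * M ^ 2 * Δ)) :
    (S : ℝ) / Γ ≥ (S : ℝ) - 2 := by
  rcases le_or_gt S 2 with hS2 | hS2
  · have : (S : ℝ) ≤ 2 := by exact_mod_cast hS2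
    linarith [div_nonneg (Nat.cast_nonneg S) hΓ]
  have hSR : (2 : ℝ) < S := by exact_mod_cast hS2
  rw [sum_Icc_add_sub_one] at hΓeq
  have hΓpos : 0 < Γ := hΓ.lt_of_ne fun h ↦ by subst h; nlinarith
  have hmin : ((S : ℝ) - 1) * (W * M) + ((S : ℝ) - 1) * ((S : ℝ) - 2) / 2 < w * M ^ 2 * Δ := by
    by_contra! hge
    have hcast : ((S - 1 : ℕ) : ℝ) = S - 1 := by push_cast [Nat.cast_sub (by omega : 1 ≤ S)]; ring
    have := hSmin (S - 1) (by omega) (by rw [sum_Icc_add_sub_one, hcast]; linarith)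
    omega
  rw [ge_iff_le, le_div_iff₀ hΓpos]
  exact sub_two_mul_le_of_sq_mul_eq (by linarith) hSR hΓpos hmin hΓeq

/-- Algebraic fact on S_t and Γ_t in the strongly convex ACGD-S analysis:
if S = min{n ∈ ℕ₊ : Σ_{s=1}^n (W M + (s−1)) ≥ w M² Δ} and Γ ≥ 0 satisfies
Σ_{s=1}^S (Γ W M + (s−1)) = Γ² w M² Δ, then S/Γ ≥ S − 2. -/
theorem S_div_Gamma_ge
    (W M Δ w : ℝ) (hW : 0 < W) (hM : 0 < M) (hΔ : 0 < Δ) (hw : 0 < w)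
    (hWM : 1 ≤ W * M)
    (S : ℕ) (hS1 : 1 ≤ S)
    (hSge : (∑ s ∈ Finset.Icc 1 S, (W * M + ((s : ℝ) - 1))) ≥ w * M ^ 2 * Δ)
    (hSmin : ∀ n : ℕ, 1 ≤ n →
      (∑ s ∈ Finset.Icc 1 n, (W * M + ((s : ℝ) - 1))) ≥ w * M ^ 2 * Δ → S ≤ n)
    (Γ : ℝ) (hΓ : 0 ≤ Γ)
    (hΓeq : (∑ s ∈ Finset.Icc 1 S, (Γ * (W * M) + ((s : ℝ) - 1))) = Γ ^ 2 * (w * M ^ 2 * Δ)) :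
    (S : ℝ) / Γ ≥ (S : ℝ) - 2 :=
  S_div_Gamma_ge_general W M Δ w hWM S hSmin Γ hΓ hΓeq
end

section
/- Let N ≥ 1, nonnegative integers S_1,…,S_N, positive reals W_1,…,W_N, M̄ > 0 and bounds M_t ≤ M̄, and suppose Σ_{i=1}^{t−1}[S_i − 3]_+ ≤ M̄ W_t for all t, and Σ_{s=1}^{S_t − 1}(M̄ W_t + (s−1)) ≤ M̄² w_t Δ for all t, where w_t > 0 and Δ > 0. Define R = Σ_{t=1}^N [S_t − 3]_+. Then R²/2 ≤ M̄² Δ Σ_{t=1}^N w_t. -/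
/-!
Number the `R = Σ_t [S_t − 3]₊` inner iterations consecutively, block after block. Then
`R²/2 ≤ 1 + 2 + ⋯ + R`, and the iteration numbered `Σ_{j<t} R_j + s` of block `t` contributes
at most `M̄ W_t + s` by the prefix condition. After the shift `s ↦ s + 1`, block `t` is dominated
by the sum `Σ_{s=1}^{S_t − 1} (M̄ W_t + (s − 1))`, which is at most `M̄² w_t Δ` by minimality of `S_t`.
-/

open Finset

theorem sq_div_two_le_sum_Icc_one (n : ℕ) : (n : ℝ) ^ 2 / 2 ≤ ∑ s ∈ Icc 1 n, (s : ℝ) := by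
  induction n with
  | zero => simp
  | succ n ih =>
    rw [sum_Icc_succ_top (by omega)]
    push_cast
    nlinarith

section Blocks

variable {M : Type*} [AddCommMonoid M]

theorem sum_Icc_one_add (f : ℕ → M) (m n : ℕ) :
    ∑ s ∈ Icc 1 (m + n), f s = ∑ s ∈ Icc 1 m, f s + ∑ s ∈ Icc 1 n, f (m + s) := by
  induction n with
  | zero => simp
  | succ n ih =>
    rw [← add_assoc, sum_Icc_succ_top (by omega), sum_Icc_succ_top (by omega), ih, add_assoc]
    rfl

theorem sum_Icc_one_sum_eq_sum_blocks (f : ℕ → M) (r : ℕ → ℕ) (n : ℕ) :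
    ∑ s ∈ Icc 1 (∑ t ∈ Icc 1 n, r t), f s =
      ∑ t ∈ Icc 1 n, ∑ s ∈ Icc 1 (r t), f (∑ i ∈ Icc 1 (t - 1), r i + s) := by
  induction n with
  | zero => simp
  | succ n ih =>
    rw [sum_Icc_succ_top (by omega), sum_Icc_succ_top (by omega), sum_Icc_one_add, ih,
      Nat.add_sub_cancel]

end Blocks

theorem sum_Icc_one_add_le_sum_Icc_one_add_sub_one {a : ℝ} (ha : 0 ≤ a) {m n : ℕ}
    (hmn : m ≤ n - 1) :
    ∑ s ∈ Icc 1 m, (a + s) ≤ ∑ s ∈ Icc 1 n, (a + ((s : ℝ) - 1)) := by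
  have hshift : ∑ s ∈ Icc 1 m, (a + s) = ∑ s ∈ Icc 2 (m + 1), (a + ((s : ℝ) - 1)) := by
    rw [show Icc 2 (m + 1) = (Icc 1 m).map (addRightEmbedding 1) from
      (map_add_right_Icc 1 m 1).symm, sum_map]
    simp
  rw [hshift]
  refine sum_le_sum_of_subset_of_nonneg ?_ fun s hs _ => ?_
  · intro s hs
    simp only [mem_Icc] at hs ⊢
    omega
  · have : (1 : ℝ) ≤ s := by exact_mod_cast (mem_Icc.mp hs).1
    linarith

theorem inner_iteration_count_bound_general
    (N : ℕ)
    (S : ℕ → ℕ) (W w : ℕ → ℝ) (Mbar Δ : ℝ)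
    (hprefix : ∀ t ∈ Finset.Icc 1 N,
      (∑ i ∈ Finset.Icc 1 (t - 1), ((S i - 3 : ℕ) : ℝ)) ≤ Mbar * W t)
    (hmin : ∀ t ∈ Finset.Icc 1 N,
      (∑ s ∈ Finset.Icc 1 (S t - 1), (Mbar * W t + ((s : ℝ) - 1))) ≤
        Mbar ^ 2 * w t * Δ)
    (R : ℕ) (hR : R = ∑ t ∈ Finset.Icc 1 N, (S t - 3)) :
    (R : ℝ) ^ 2 / 2 ≤ Mbar ^ 2 * Δ * ∑ t ∈ Finset.Icc 1 N, w t := by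
  have hblock : ∀ t ∈ Icc 1 N,
      ∑ s ∈ Icc 1 (S t - 3), ((∑ i ∈ Icc 1 (t - 1), (S i - 3 : ℕ) : ℕ) + (s : ℝ)) ≤
        Mbar ^ 2 * w t * Δ := fun t ht => by
    have hP := hprefix t ht
    calc _ ≤ ∑ s ∈ Icc 1 (S t - 3), (Mbar * W t + (s : ℝ)) := by
          gcongr
          push_cast
          exact hP
      _ ≤ _ := sum_Icc_one_add_le_sum_Icc_one_add_sub_one
          ((sum_nonneg fun _ _ => Nat.cast_nonneg _).trans hP) (by omega)
      _ ≤ _ := hmin t ht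
  calc (R : ℝ) ^ 2 / 2 ≤ ∑ s ∈ Icc 1 R, (s : ℝ) := sq_div_two_le_sum_Icc_one R
    _ = ∑ t ∈ Icc 1 N, ∑ s ∈ Icc 1 (S t - 3),
          ((∑ i ∈ Icc 1 (t - 1), (S i - 3 : ℕ) : ℕ) + (s : ℝ)) := by
        rw [hR, sum_Icc_one_sum_eq_sum_blocks]
        push_cast
        rfl
    _ ≤ ∑ t ∈ Icc 1 N, Mbar ^ 2 * w t * Δ := sum_le_sum hblock
    _ = Mbar ^ 2 * Δ * ∑ t ∈ Icc 1 N, w t := by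
        rw [mul_sum]
        exact sum_congr rfl fun _ _ => mul_right_comm _ _ _

/-- The counting argument bounding the total number of inner iterations in the
strongly convex ACGD-S analysis: with R = Σ_{t=1}^N [S_t − 3]₊,
one has R²/2 ≤ M̄² Δ Σ_{t=1}^N w_t. -/
theorem inner_iteration_count_bound
    (N : ℕ) (hN : 1 ≤ N)
    (S : ℕ → ℕ) (W w M : ℕ → ℝ) (Mbar Δ : ℝ)
    (hMbar : 0 < Mbar) (hΔ : 0 < Δ)
    (hWpos : ∀ t ∈ Finset.Icc 1 N, 0 < W t)
    (hwpos : ∀ t ∈ Finset.Icc 1 N, 0 < w t)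
    (hMle : ∀ t ∈ Finset.Icc 1 N, M t ≤ Mbar)
    (hMpos : ∀ t ∈ Finset.Icc 1 N, 0 < M t)
    (hprefix : ∀ t ∈ Finset.Icc 1 N,
      (∑ i ∈ Finset.Icc 1 (t - 1), ((S i - 3 : ℕ) : ℝ)) ≤ Mbar * W t)
    (hmin : ∀ t ∈ Finset.Icc 1 N,
      (∑ s ∈ Finset.Icc 1 (S t - 1), (Mbar * W t + ((s : ℝ) - 1))) ≤
        Mbar ^ 2 * w t * Δ)
    (R : ℕ) (hR : R = ∑ t ∈ Finset.Icc 1 N, (S t - 3)) :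
    (R : ℝ) ^ 2 / 2 ≤ Mbar ^ 2 * Δ * ∑ t ∈ Finset.Icc 1 N, w t :=
  inner_iteration_count_bound_general N S W w Mbar Δ hprefix hmin R hR
end
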